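/- Let ν₀, ν₁ be probability distributions on a finite set S and w ∈ [0,1]; set ν = (1-w)ν₀ + wν₁. Then the maximum over functions φ : S → [0,1] of Σ_x [(1-w)ν₀(x)·hs(1-φ(x)) + wν₁(x)·hs(φ(x))] equals Σ_x ν(x)·(1 - √(1 - R(x)²)), where R(x) = |(1-w)ν₀(x) - wν₁(x)|/ν(x) (with terms where ν(x)=0 omitted) and hs(q) = 1 - √((1-q)/q). -/

import Mathlib

/-!
The optimization decouples over `x`: with weights `a₀ = (1-w)ν₀(x)`, `a₁ = wν₁(x)` and a forecast
`p ∈ (0,1)`, put `t = √(p/(1-p))`; the score at `x` is `a₀ + a₁ - (a₀ t + a₁ / t)`, which by AM-GM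
is at most `a₀ + a₁ - 2√(a₀a₁)`, with equality at `t = √(a₁/a₀)`, i.e. `p = a₁/(a₀+a₁)`. The forecasts
`p ∈ {0, 1}` score `-∞` unless the weight they ignore vanishes (`0 · ⊥ = 0` in `EReal`). Finally
`1 - R² = 4a₀a₁/(a₀+a₁)²`, so `(a₀+a₁)(1 - √(1 - R²)) = a₀ + a₁ - 2√(a₀a₁)`.
-/

open Finset

/-- The scoring rule `hs(q) = 1 - √((1-q)/q)`, with `hs 0 = -∞`. -/
noncomputable def hs : ℝ → EReal := fun q =>
  if q = 0 then ⊥ else ((1 - Real.sqrt ((1 - q) / q) : ℝ) : EReal)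

lemma Real.two_sqrt_mul_le_mul_add_div {a b t : ℝ} (ha : 0 ≤ a) (hb : 0 ≤ b) (ht : 0 < t) :
    2 * √(a * b) ≤ a * t + b / t := by
  have hsq : a * t + b / t - 2 * √(a * b) = (√a * t - √b) ^ 2 / t := by
    rw [Real.sqrt_mul ha]
    field_simp
    linear_combination -t ^ 2 * Real.sq_sqrt ha - Real.sq_sqrt hb
  have : 0 ≤ (√a * t - √b) ^ 2 / t := by positivity
  linarith

lemma Real.mul_sqrt_div_add_div_sqrt_div {a b : ℝ} (ha : 0 < a) (hb : 0 < b) :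
    a * √(b / a) + b / √(b / a) = 2 * √(a * b) := by
  rw [Real.sqrt_div' _ ha.le, Real.sqrt_mul ha.le]
  field_simp
  simp only [Real.sq_sqrt ha.le, Real.sq_sqrt hb.le]
  ring

lemma hs_zero : hs 0 = ⊥ := if_pos rfl

lemma hs_of_ne_zero {q : ℝ} (hq : q ≠ 0) : hs q = ((1 - √((1 - q) / q) : ℝ) : EReal) :=
  if_neg hq

lemma hs_one : hs 1 = 1 := by
  simp [hs_of_ne_zero one_ne_zero]

noncomputable def hsScore (a₀ a₁ p : ℝ) : EReal := a₀ * hs (1 - p) + a₁ * hs p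

lemma hsScore_comm (a₀ a₁ p : ℝ) : hsScore a₀ a₁ p = hsScore a₁ a₀ (1 - p) := by
  rw [hsScore, hsScore, sub_sub_cancel, add_comm]

lemma hsScore_zero_right (a₀ : ℝ) : hsScore a₀ 0 0 = a₀ := by
  simp [hsScore, hs_one]

lemma hsScore_zero_of_pos (a₀ : ℝ) {a₁ : ℝ} (h : 0 < a₁) : hsScore a₀ a₁ 0 = ⊥ := by
  rw [hsScore, hs_zero, EReal.mul_bot_of_pos (EReal.coe_pos.2 h), sub_zero, hs_one, mul_one,
    EReal.add_bot]

lemma hsScore_of_mem_Ioo (a₀ a₁ : ℝ) {p : ℝ} (hp : p ∈ Set.Ioo 0 1) :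
    hsScore a₀ a₁ p =
      ((a₀ + a₁ - (a₀ * √(p / (1 - p)) + a₁ / √(p / (1 - p))) : ℝ) : EReal) := by
  rw [hsScore, hs_of_ne_zero hp.1.ne', hs_of_ne_zero (sub_pos.2 hp.2).ne', sub_sub_cancel,
    ← inv_div p (1 - p), Real.sqrt_inv, ← EReal.coe_mul, ← EReal.coe_mul, ← EReal.coe_add]
  congr 1
  ring

lemma hsScore_zero_le {a₀ a₁ : ℝ} (h₁ : 0 ≤ a₁) :
    hsScore a₀ a₁ 0 ≤ ((a₀ + a₁ - 2 * √(a₀ * a₁) : ℝ) : EReal) := by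
  rcases h₁.eq_or_lt with rfl | h₁
  · simp [hsScore_zero_right]
  · simp [hsScore_zero_of_pos a₀ h₁]

lemma hsScore_le {a₀ a₁ p : ℝ} (h₀ : 0 ≤ a₀) (h₁ : 0 ≤ a₁) (hp : p ∈ Set.Icc 0 1) :
    hsScore a₀ a₁ p ≤ ((a₀ + a₁ - 2 * √(a₀ * a₁) : ℝ) : EReal) := by
  rcases hp.1.eq_or_lt with rfl | hp₀
  · exact hsScore_zero_le h₁
  rcases hp.2.eq_or_lt with rfl | hp₁
  · rw [hsScore_comm, sub_self, add_comm a₀, mul_comm a₀]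
    exact hsScore_zero_le h₀
  rw [hsScore_of_mem_Ioo a₀ a₁ ⟨hp₀, hp₁⟩, EReal.coe_le_coe_iff]
  have ht : 0 < √(p / (1 - p)) := Real.sqrt_pos.2 (div_pos hp₀ (sub_pos.2 hp₁))
  linarith [Real.two_sqrt_mul_le_mul_add_div h₀ h₁ ht]

lemma hsScore_div_add {a₀ a₁ : ℝ} (h₀ : 0 ≤ a₀) (h₁ : 0 ≤ a₁) :
    hsScore a₀ a₁ (a₁ / (a₀ + a₁)) = ((a₀ + a₁ - 2 * √(a₀ * a₁) : ℝ) : EReal) := by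
  rcases h₁.eq_or_lt with rfl | h₁
  · simp [hsScore_zero_right]
  rcases h₀.eq_or_lt with rfl | h₀
  · rw [hsScore_comm, zero_add, div_self h₁.ne', sub_self, hsScore_zero_right]
    simp
  have hp : a₁ / (a₀ + a₁) ∈ Set.Ioo 0 1 :=
    ⟨by positivity, (div_lt_one (by positivity)).2 (by linarith)⟩
  have hodds : a₁ / (a₀ + a₁) / (1 - a₁ / (a₀ + a₁)) = a₁ / a₀ := by
    field_simp [h₀.ne']
    ring
  rw [hsScore_of_mem_Ioo a₀ a₁ hp, hodds, Real.mul_sqrt_div_add_div_sqrt_div h₀ h₁]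

lemma add_mul_one_sub_sqrt_one_sub_sq_abs_sub_div {a b : ℝ} (ha : 0 ≤ a) (hb : 0 ≤ b) :
    (a + b) * (1 - √(1 - (|a - b| / (a + b)) ^ 2)) = a + b - 2 * √(a * b) := by
  rcases (add_nonneg ha hb).eq_or_lt with hab | hab
  · obtain ⟨rfl, rfl⟩ : a = 0 ∧ b = 0 := ⟨by linarith, by linarith⟩
    simp
  have h : 1 - (|a - b| / (a + b)) ^ 2 = (2 * √(a * b) / (a + b)) ^ 2 := by
    rw [div_pow, div_pow, sq_abs, mul_pow, Real.sq_sqrt (mul_nonneg ha hb)]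
    field_simp
    ring
  rw [h, Real.sqrt_sq (by positivity)]
  field_simp

lemma EReal.coe_finset_sum {ι : Type*} (s : Finset ι) (f : ι → ℝ) :
    ((∑ i ∈ s, f i : ℝ) : EReal) = ∑ i ∈ s, (f i : EReal) :=
  map_sum (⟨⟨(↑), EReal.coe_zero⟩, EReal.coe_add⟩ : ℝ →+ EReal) f s

theorem isGreatest_sum_hsScore {S : Type*} [Fintype S] {a₀ a₁ : S → ℝ}
    (h₀ : ∀ x, 0 ≤ a₀ x) (h₁ : ∀ x, 0 ≤ a₁ x) :
    IsGreatest
      {e : EReal | ∃ φ : S → ℝ, (∀ x, φ x ∈ Set.Icc (0 : ℝ) 1) ∧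
        e = ∑ x, hsScore (a₀ x) (a₁ x) (φ x)}
      ((∑ x, (a₀ x + a₁ x - 2 * √(a₀ x * a₁ x)) : ℝ) : EReal) := by
  rw [EReal.coe_finset_sum]
  refine ⟨⟨fun x => a₁ x / (a₀ x + a₁ x), fun x => ?_, ?_⟩, ?_⟩
  · have hsum : 0 ≤ a₀ x + a₁ x := add_nonneg (h₀ x) (h₁ x)
    exact ⟨div_nonneg (h₁ x) hsum, div_le_one_of_le₀ (le_add_of_nonneg_left (h₀ x)) hsum⟩
  · exact (sum_congr rfl fun x _ => hsScore_div_add (h₀ x) (h₁ x)).symm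
  · rintro e ⟨φ, hφ, rfl⟩
    exact sum_le_sum fun x _ => hsScore_le (h₀ x) (h₁ x) (hφ x)

theorem max_hs_score_eq_weighted_hellinger_general
    {S : Type*} [Fintype S]
    (ν₀ ν₁ : S → ℝ) (w : ℝ)
    (h00 : ∀ x, 0 ≤ ν₀ x) (h10 : ∀ x, 0 ≤ ν₁ x)
    (hw : w ∈ Set.Icc (0 : ℝ) 1) :
    IsGreatest
      {e : EReal | ∃ φ : S → ℝ, (∀ x, φ x ∈ Set.Icc (0 : ℝ) 1) ∧
        e = ∑ x, ((((1 - w) * ν₀ x : ℝ) : EReal) * hs (1 - φ x) +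
                  (((w * ν₁ x : ℝ)) : EReal) * hs (φ x))}
      (((∑ x, ((1 - w) * ν₀ x + w * ν₁ x) *
          (1 - Real.sqrt (1 -
            (|(1 - w) * ν₀ x - w * ν₁ x| / ((1 - w) * ν₀ x + w * ν₁ x)) ^ 2)) : ℝ) : EReal)) := by
  have h₀ : ∀ x, 0 ≤ (1 - w) * ν₀ x := fun x => mul_nonneg (sub_nonneg.2 hw.2) (h00 x)
  have h₁ : ∀ x, 0 ≤ w * ν₁ x := fun x => mul_nonneg hw.1 (h10 x)
  rw [sum_congr rfl fun x _ => add_mul_one_sub_sqrt_one_sub_sq_abs_sub_div (h₀ x) (h₁ x)]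
  exact isGreatest_sum_hsScore h₀ h₁

/-- The best achievable expected `hs` score for predicting
`b ← Bernoulli(w)` from a sample of `ν_b` equals the weighted squared Hellinger
distance `∑ₓ ν(x)·(1 - √(1 - R(x)²))`, where `ν = (1-w)ν₀ + wν₁` and
`R(x) = |(1-w)ν₀(x) - wν₁(x)|/ν(x)`. -/
theorem max_hs_score_eq_weighted_hellinger
    {S : Type*} [Fintype S]
    (ν₀ ν₁ : S → ℝ) (w : ℝ)
    (h00 : ∀ x, 0 ≤ ν₀ x) (h10 : ∀ x, 0 ≤ ν₁ x)
    (h01 : ∑ x, ν₀ x = 1) (h11 : ∑ x, ν₁ x = 1)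
    (hw : w ∈ Set.Icc (0 : ℝ) 1) :
    IsGreatest
      {e : EReal | ∃ φ : S → ℝ, (∀ x, φ x ∈ Set.Icc (0 : ℝ) 1) ∧
        e = ∑ x, ((((1 - w) * ν₀ x : ℝ) : EReal) * hs (1 - φ x) +
                  (((w * ν₁ x : ℝ)) : EReal) * hs (φ x))}
      (((∑ x, ((1 - w) * ν₀ x + w * ν₁ x) *
          (1 - Real.sqrt (1 -
            (|(1 - w) * ν₀ x - w * ν₁ x| / ((1 - w) * ν₀ x + w * ν₁ x)) ^ 2)) : ℝ) : EReal)) :=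
  max_hs_score_eq_weighted_hellinger_general ν₀ ν₁ w h00 h10 hw
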